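/- arXiv:2309.03765 — 4 statements merged into one kernel-verified Lean document; each statement's English description precedes it below -/
import Mathlib

section
/- Let M = SE₂(3) × (ℝ³ × ℝ³) and let C be the Two-Frame group of pairs (C, γ) with C ∈ SE₂(3), γ ∈ ℝ³ × ℝ³, product (C_X, γ_X)(C_Y, γ_Y) = (C_X C_Y, γ_X + A_X * γ_Y) where A_X is the rotation block of C_X and A * (γ₁, γ₂) = (A γ₁, A γ₂). Then the map φ : C × M → M defined by φ((C, γ), (P, b)) = (P C, Aᵀ * (b − γ)), where A is the rotation block of C, is a transitive right group action of C on M. -/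
open Matrix

noncomputable section

abbrev V3 := Fin 3 → ℝ
abbrev Mat3 := Matrix (Fin 3) (Fin 3) ℝ
abbrev Mat5 := Matrix (Fin 5) (Fin 5) ℝ

def SO3 (A : Mat3) : Prop := Aᵀ * A = 1 ∧ A.det = 1

def se23mk (A : Mat3) (a b : V3) : Mat5 :=
  Matrix.of fun i j =>
    if hi : (i : ℕ) < 3 then
      if hj : (j : ℕ) < 3 then A ⟨(i : ℕ), hi⟩ ⟨(j : ℕ), hj⟩
      else if (j : ℕ) = 3 then a ⟨(i : ℕ), hi⟩ else b ⟨(i : ℕ), hi⟩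
    else if (i : ℕ) = (j : ℕ) then 1 else 0

def SE23 (C : Mat5) : Prop := ∃ (A : Mat3) (a b : V3), SO3 A ∧ C = se23mk A a b

/-- Rotation block: upper-left 3×3 block of a 5×5 matrix. -/
def rotB (C : Mat5) : Mat3 :=
  Matrix.of fun i j => C (Fin.castLE (by norm_num) i) (Fin.castLE (by norm_num) j)

/-- `A * (γ₁, γ₂) = (A γ₁, A γ₂)`. -/
def star3 (A : Mat3) (γ : V3 × V3) : V3 × V3 := (A *ᵥ γ.1, A *ᵥ γ.2)

/-- The product of the Two-Frame group `C = SO(3) ⋉ (ℝ⁶ ⊕ ℝ⁶)`: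
`(C_X, γ_X)(C_Y, γ_Y) = (C_X C_Y, γ_X + A_X * γ_Y)` where `A_X` is the rotation
block of `C_X`. -/
def tfMul (X Y : Mat5 × (V3 × V3)) : Mat5 × (V3 × V3) :=
  (X.1 * Y.1, X.2 + star3 (rotB X.1) Y.2)

/-- The action `φ((C, γ), (P, b)) = (P C, Aᵀ * (b − γ))` of the Two-Frame group on
`M = SE₂(3) × (ℝ³ × ℝ³)`, with `A` the rotation block of `C`. -/
def phiTF (C : Mat5) (γ : V3 × V3) (P : Mat5) (b : V3 × V3) : Mat5 × (V3 × V3) :=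
  (P * C, star3 (rotB C)ᵀ (b - γ))

/-! Elements of SE₂(3) are the block matrices `[[A, a, b], [0, I₂]]`: they are closed under
products, `[[Aᵀ, -Aᵀa, -Aᵀb], [0, I₂]]` is a right inverse, and the rotation block is
multiplicative on them. The compatibility axiom then reduces to `A_Yᵀ A_Y = 1` for the
rotation block of `C_Y`, and `(P₁, b₁)` is sent to `(P₂, b₂)` by `C = P₁⁻¹ P₂`,
`γ = b₁ - A_C * b₂`. -/

lemma rotB_se23mk (A : Mat3) (a b : V3) : rotB (se23mk A a b) = A := by
  ext i j
  fin_cases i <;> fin_cases j <;> rfl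

lemma se23mk_one : se23mk 1 0 0 = 1 := by
  ext i j
  fin_cases i <;> fin_cases j <;> simp [se23mk, one_apply]

lemma se23mk_mul (A A' : Mat3) (a b a' b' : V3) :
    se23mk A a b * se23mk A' a' b' =
      se23mk (A * A') (A *ᵥ a' + a) (A *ᵥ b' + b) := by
  ext i j
  fin_cases i <;> fin_cases j <;>
    simp [se23mk, mul_apply, Fin.sum_univ_five, Fin.sum_univ_three, mulVec, dotProduct]

lemma rotB_one : rotB 1 = 1 := by
  rw [← se23mk_one, rotB_se23mk]

lemma se23mk_mul_se23mk_transpose {A : Mat3} (hA : A * Aᵀ = 1) (a b : V3) :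
    se23mk A a b * se23mk Aᵀ (-(Aᵀ *ᵥ a)) (-(Aᵀ *ᵥ b)) = 1 := by
  simp only [se23mk_mul, mulVec_neg, mulVec_mulVec, hA, one_mulVec, neg_add_cancel,
    se23mk_one]

namespace SO3

lemma mul {A B : Mat3} (hA : SO3 A) (hB : SO3 B) : SO3 (A * B) := by
  refine ⟨?_, by rw [det_mul, hA.2, hB.2, one_mul]⟩
  rw [transpose_mul, Matrix.mul_assoc, ← Matrix.mul_assoc Aᵀ, hA.1, Matrix.one_mul, hB.1]

lemma mul_transpose_self {A : Mat3} (hA : SO3 A) : A * Aᵀ = 1 :=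
  mul_eq_one_comm.mp hA.1

lemma transpose {A : Mat3} (hA : SO3 A) : SO3 Aᵀ :=
  ⟨by rw [transpose_transpose, hA.mul_transpose_self], by rw [det_transpose, hA.2]⟩

end SO3

namespace SE23

lemma mul {P Q : Mat5} (hP : SE23 P) (hQ : SE23 Q) : SE23 (P * Q) := by
  obtain ⟨A, a, b, hA, rfl⟩ := hP
  obtain ⟨A', a', b', hA', rfl⟩ := hQ
  exact ⟨_, _, _, hA.mul hA', se23mk_mul ..⟩

lemma so3_rotB {P : Mat5} (hP : SE23 P) : SO3 (rotB P) := by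
  obtain ⟨A, a, b, hA, rfl⟩ := hP
  rwa [rotB_se23mk]

lemma rotB_mul {P Q : Mat5} (hP : SE23 P) (hQ : SE23 Q) :
    rotB (P * Q) = rotB P * rotB Q := by
  obtain ⟨A, a, b, -, rfl⟩ := hP
  obtain ⟨A', a', b', -, rfl⟩ := hQ
  simp only [se23mk_mul, rotB_se23mk]

lemma exists_mul_eq_one {P : Mat5} (hP : SE23 P) : ∃ Q, SE23 Q ∧ P * Q = 1 := by
  obtain ⟨A, a, b, hA, rfl⟩ := hP
  exact ⟨_, ⟨_, _, _, hA.transpose, rfl⟩,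
    se23mk_mul_se23mk_transpose hA.mul_transpose_self a b⟩

end SE23

lemma star3_star3 (M N : Mat3) (x : V3 × V3) : star3 M (star3 N x) = star3 (M * N) x := by
  simp [star3]

lemma star3_one (x : V3 × V3) : star3 1 x = x := by
  simp [star3]

lemma star3_sub (M : Mat3) (x y : V3 × V3) : star3 M (x - y) = star3 M x - star3 M y := by
  simp [star3, mulVec_sub]

lemma star3_transpose_mul_sub_add {A B : Mat3} (hA : Aᵀ * A = 1) (b γ δ : V3 × V3) :
    star3 (A * B)ᵀ (b - (γ + star3 A δ)) = star3 Bᵀ (star3 Aᵀ (b - γ) - δ) := by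
  rw [transpose_mul, ← star3_star3, sub_add_eq_sub_sub, star3_sub Aᵀ, star3_star3, hA,
    star3_one]

/-- `φ` is a transitive right group action of the Two-Frame group
`C = SO(3) ⋉ (ℝ⁶ ⊕ ℝ⁶)` on `M = SE₂(3) × (ℝ³ × ℝ³)`. -/
theorem stmt4 :
    -- φ maps M into M
    (∀ (C : Mat5) (γ : V3 × V3) (P : Mat5) (b : V3 × V3),
      SE23 C → SE23 P → SE23 (phiTF C γ P b).1) ∧
    -- identity axiom: φ((I₅, 0), ξ) = ξ
    (∀ (P : Mat5) (b : V3 × V3), SE23 P → phiTF 1 0 P b = (P, b)) ∧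
    -- compatibility axiom: φ(X, φ(Y, ξ)) = φ(Y X, ξ)
    (∀ (CX : Mat5) (γX : V3 × V3) (CY : Mat5) (γY : V3 × V3)
        (P : Mat5) (b : V3 × V3), SE23 CX → SE23 CY → SE23 P →
      phiTF CX γX (phiTF CY γY P b).1 (phiTF CY γY P b).2
        = phiTF (tfMul (CY, γY) (CX, γX)).1 (tfMul (CY, γY) (CX, γX)).2 P b) ∧
    -- transitivity
    (∀ (P₁ : Mat5) (b₁ : V3 × V3) (P₂ : Mat5) (b₂ : V3 × V3),
      SE23 P₁ → SE23 P₂ →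
      ∃ (C : Mat5) (γ : V3 × V3), SE23 C ∧ phiTF C γ P₁ b₁ = (P₂, b₂)) := by
  refine ⟨fun C γ P b hC hP ↦ hP.mul hC, ?_, ?_, ?_⟩
  · intro P b _
    simp [phiTF, rotB_one, star3_one]
  · intro CX γX CY γY P b hCX hCY _
    simp only [phiTF, tfMul, hCY.rotB_mul hCX, Matrix.mul_assoc,
      star3_transpose_mul_sub_add hCY.so3_rotB.1]
  · intro P₁ b₁ P₂ b₂ hP₁ hP₂
    obtain ⟨Q, hQ, hP₁Q⟩ := hP₁.exists_mul_eq_one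
    have hC : SE23 (Q * P₂) := hQ.mul hP₂
    refine ⟨Q * P₂, b₁ - star3 (rotB (Q * P₂)) b₂, hC, Prod.ext ?_ ?_⟩
    · rw [phiTF, ← Matrix.mul_assoc, hP₁Q, Matrix.one_mul]
    · rw [phiTF, sub_sub_cancel, star3_star3, hC.so3_rotB.1, star3_one]
end
end

section
/- Let L = se(3) × ℝ³ × se(3) (triples (W, ν, T)) and let A = (SE(3) ⋉ se(3)) × ℝ³ be the group of triples (B, β, c) with B ∈ SE(3), β ∈ se(3), c ∈ ℝ³ and product (B_X, β_X, c_X)(B_Y, β_Y, c_Y) = (B_X B_Y, β_X + B_X β_Y B_X⁻¹, c_X + c_Y). Then the map ψ : A × L → L defined by ψ((B, β, c), (W, ν, T)) = (B⁻¹ (W − β) B, Aᵀ (ν − a), B⁻¹ T B), where (A, a) are the rotation and translation blocks of B, is a right group action of A on L. -/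
open Matrix

noncomputable section

abbrev Mat4 := Matrix (Fin 4) (Fin 4) ℝ

/-- The 4×4 block matrix `[[A, a], [0, 1]]`. -/
def se3mk (A : Mat3) (a : V3) : Mat4 :=
  Matrix.of fun i j =>
    if hi : (i : ℕ) < 3 then
      if hj : (j : ℕ) < 3 then A ⟨(i : ℕ), hi⟩ ⟨(j : ℕ), hj⟩
      else a ⟨(i : ℕ), hi⟩
    else if (i : ℕ) = (j : ℕ) then 1 else 0

/-- `SE(3)` (the homogeneous Galilean group `HG(3)` of the paper): 4×4 block matrices
`[[A, a], [0, 1]]` with `A ∈ SO(3)`, `a ∈ ℝ³`. -/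
def SE3 (B : Mat4) : Prop := ∃ (A : Mat3) (a : V3), SO3 A ∧ B = se3mk A a

/-- `x^∧`: the 3×3 skew-symmetric matrix with `x^∧ y = x × y`. -/
def wedge (x : V3) : Mat3 :=
  !![0, -x 2, x 1; x 2, 0, -x 0; -x 1, x 0, 0]

/-- The 4×4 block matrix `[[ω^∧, u], [0, 0]]`. -/
def se3algMk (ω u : V3) : Mat4 :=
  Matrix.of fun i j =>
    if hi : (i : ℕ) < 3 then
      if hj : (j : ℕ) < 3 then wedge ω ⟨(i : ℕ), hi⟩ ⟨(j : ℕ), hj⟩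
      else u ⟨(i : ℕ), hi⟩
    else 0

/-- `se(3)`: 4×4 block matrices `[[ω^∧, u], [0, 0]]` with `ω, u ∈ ℝ³`. -/
def se3Alg (M : Mat4) : Prop := ∃ ω u : V3, M = se3algMk ω u

/-- The rotation block `A` of `B ∈ SE(3)`: its upper-left 3×3 block. -/
def rotB4 (B : Mat4) : Mat3 :=
  Matrix.of fun i j => B (Fin.castLE (by norm_num) i) (Fin.castLE (by norm_num) j)

/-- The translation column `a` of `B ∈ SE(3)`: the first three entries of its
last column. -/
def transB4 (B : Mat4) : V3 := fun i => B (Fin.castLE (by norm_num) i) 3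

/-- The product of the group `A = (SE(3) ⋉ se(3)) × ℝ³`:
`(B_X, β_X, c_X)(B_Y, β_Y, c_Y) = (B_X B_Y, β_X + B_X β_Y B_X⁻¹, c_X + c_Y)`. -/
def dpMul (X Y : Mat4 × Mat4 × V3) : Mat4 × Mat4 × V3 :=
  (X.1 * Y.1, X.2.1 + X.1 * Y.2.1 * X.1⁻¹, X.2.2 + Y.2.2)

/-- The action `ψ((B, β, c), (W, ν, T)) = (B⁻¹ (W − β) B, Aᵀ (ν − a), B⁻¹ T B)` of
`A = (SE(3) ⋉ se(3)) × ℝ³` on the input space `L = se(3) × ℝ³ × se(3)`, where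
`(A, a)` are the rotation and translation blocks of `B`. -/
def psiDP (B β : Mat4) (c : V3) (W : Mat4) (ν : V3) (T : Mat4) :
    Mat4 × V3 × Mat4 :=
  (B⁻¹ * (W - β) * B, (rotB4 B)ᵀ *ᵥ (ν - transB4 B), B⁻¹ * T * B)

/-!
Writing `B = [[A, a], [0, 1]]`, the three components of `ψ` are the inverse affine motion
`ν ↦ Aᵀ (ν − a)` and the conjugations `W ↦ B⁻¹ (W − β) B`, `T ↦ B⁻¹ T B`. Compatibility with the
semidirect product is then the rule `(B_Y B_X)⁻¹ = B_X⁻¹ B_Y⁻¹` together with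
`B_Y⁻¹ (B_Y β_X B_Y⁻¹) B_Y = β_X`, and, for the vector part, `A_Yᵀ A_Y = 1`.
-/

section GeneralMatrices

variable {n R : Type*} [Fintype n] [DecidableEq n] [CommRing R]

theorem transpose_mul_mulVec_sub_mulVec_add {A : Matrix n n R} (hA : Aᵀ * A = 1)
    (A' : Matrix n n R) (a a' v : n → R) :
    (A * A')ᵀ *ᵥ (v - (A *ᵥ a' + a)) = A'ᵀ *ᵥ (Aᵀ *ᵥ (v - a) - a') := by
  rw [transpose_mul, ← mulVec_mulVec, show v - (A *ᵥ a' + a) = v - a - A *ᵥ a' by abel,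
    mulVec_sub, mulVec_mulVec, hA, one_mulVec]

theorem inv_mul_sub_mul_inv_mul_sub_mul {B : Matrix n n R} (hB : IsUnit B.det)
    (C β γ W : Matrix n n R) :
    C⁻¹ * (B⁻¹ * (W - β) * B - γ) * C = (B * C)⁻¹ * (W - (β + B * γ * B⁻¹)) * (B * C) := by
  have hγ : B⁻¹ * (B * γ * B⁻¹) * B = γ := by
    rw [Matrix.mul_assoc B, nonsing_inv_mul_cancel_left _ _ hB, Matrix.mul_assoc,
      nonsing_inv_mul _ hB, Matrix.mul_one]
  calc C⁻¹ * (B⁻¹ * (W - β) * B - γ) * C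
      = C⁻¹ * (B⁻¹ * (W - (β + B * γ * B⁻¹)) * B) * C := by
        rw [sub_add_eq_sub_sub, Matrix.mul_sub B⁻¹ (W - β), Matrix.sub_mul _ _ B, hγ]
    _ = (B * C)⁻¹ * (W - (β + B * γ * B⁻¹)) * (B * C) := by
        simp only [Matrix.mul_inv_rev, Matrix.mul_assoc]

end GeneralMatrices

lemma se3mk_mul (A A' : Mat3) (a a' : V3) :
    se3mk A a * se3mk A' a' = se3mk (A * A') (A *ᵥ a' + a) := by
  ext i j
  fin_cases i <;> fin_cases j <;>
    simp [se3mk, Matrix.mul_apply, Fin.sum_univ_four, Fin.sum_univ_three, Matrix.mulVec,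
      dotProduct]

lemma se3mk_one : se3mk 1 0 = 1 := by
  ext i j
  fin_cases i <;> fin_cases j <;> simp [se3mk, Matrix.one_apply]

lemma rotB4_se3mk (A : Mat3) (a : V3) : rotB4 (se3mk A a) = A := by
  ext i j
  fin_cases i <;> fin_cases j <;> simp [rotB4, se3mk]

lemma transB4_se3mk (A : Mat3) (a : V3) : transB4 (se3mk A a) = a := by
  ext i
  fin_cases i <;> simp [transB4, se3mk]

lemma isUnit_det_se3mk {A : Mat3} (hA : IsUnit A.det) (a : V3) : IsUnit (se3mk A a).det := by
  refine isUnit_det_of_right_inverse (B := se3mk A⁻¹ (-(A⁻¹ *ᵥ a))) ?_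
  rw [se3mk_mul, mul_nonsing_inv _ hA, mulVec_neg, mulVec_mulVec, mul_nonsing_inv _ hA,
    one_mulVec, neg_add_cancel, se3mk_one]

/-- `ψ` is a right group action of `A = (SE(3) ⋉ se(3)) × ℝ³` on
`L = se(3) × ℝ³ × se(3)`. -/
theorem stmt9 :
    -- identity axiom: ψ((I₄, 0, 0), u) = u
    (∀ (W : Mat4) (ν : V3) (T : Mat4), se3Alg W → se3Alg T →
      psiDP 1 0 0 W ν T = (W, ν, T)) ∧
    -- compatibility axiom: ψ(X, ψ(Y, u)) = ψ(Y X, u)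
    (∀ (BX βX : Mat4) (cX : V3) (BY βY : Mat4) (cY : V3)
        (W : Mat4) (ν : V3) (T : Mat4),
      SE3 BX → se3Alg βX → SE3 BY → se3Alg βY → se3Alg W → se3Alg T →
      psiDP BX βX cX (psiDP BY βY cY W ν T).1 (psiDP BY βY cY W ν T).2.1
        (psiDP BY βY cY W ν T).2.2
        = psiDP (dpMul (BY, βY, cY) (BX, βX, cX)).1
            (dpMul (BY, βY, cY) (BX, βX, cX)).2.1
            (dpMul (BY, βY, cY) (BX, βX, cX)).2.2 W ν T) := by
  constructor
  · intro W ν T _ _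
    simp only [psiDP, inv_one, sub_zero, Matrix.one_mul, Matrix.mul_one]
    rw [← se3mk_one, rotB4_se3mk, transB4_se3mk, transpose_one, one_mulVec, sub_zero]
  · rintro BX βX cX BY βY cY W ν T ⟨AX, aX, -, rfl⟩ - ⟨AY, aY, ⟨hAY, hdetY⟩, rfl⟩ - - -
    refine Prod.ext ?_ (Prod.ext ?_ ?_)
    · exact inv_mul_sub_mul_inv_mul_sub_mul (isUnit_det_se3mk (by simp [hdetY]) aY) _ _ _ _
    · simp only [psiDP, dpMul, se3mk_mul, rotB4_se3mk, transB4_se3mk]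
      exact (transpose_mul_mulVec_sub_mulVec_add hAY AX aY aX ν).symm
    · simp only [psiDP, dpMul, Matrix.mul_inv_rev, Matrix.mul_assoc]
end
end

section
/- Let ω, bω, b̂ω ∈ ℝ³ be constant and let R, R̂ : ℝ → M₃(ℝ) and p, p̂, v, v̂ : ℝ → ℝ³ be differentiable functions satisfying Ṙ = R(ω − bω)^∧, R̂̇ = R̂(ω − b̂ω)^∧, ṗ = v, p̂̇ = v̂, with R̂(t) ∈ SO(3) for all t. Then the invariant position error e_p(t) = p(t) − R(t) R̂(t)ᵀ p̂(t) satisfies the exact differential equation ė_p(t) = e_R(t)(R̂(t)(bω − b̂ω))^∧ p̂(t) + e_v(t) for all t, where e_R = R R̂ᵀ and e_v = v − R R̂ᵀ v̂. -/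
open Matrix

noncomputable section

attribute [local instance] Matrix.normedAddCommGroup Matrix.normedSpace

/-!
The error `e_R = R R̂ᵀ` has derivative `R ((ω − bω)^∧ − (ω − b̂ω)^∧) R̂ᵀ = −R (bω − b̂ω)^∧ R̂ᵀ`
by skew-symmetry of `^∧`. Since `R̂ ∈ SO(3)`, conjugation moves the bias error through the
hat map, `R̂ x^∧ R̂ᵀ = (R̂ x)^∧`, so `ė_R = −e_R (R̂ (bω − b̂ω))^∧`. The product rule applied to
`e_p = p − e_R p̂` then gives the claim.
-/

section MatrixCalculus

variable {𝕜 : Type*} [NontriviallyNormedField 𝕜] {l m n : Type*} {t : 𝕜}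

theorem HasDerivAt.dotProduct [Fintype n] {u v : 𝕜 → n → 𝕜} {u' v' : n → 𝕜}
    (hu : HasDerivAt u u' t) (hv : HasDerivAt v v' t) :
    HasDerivAt (fun s => u s ⬝ᵥ v s) (u' ⬝ᵥ v t + u t ⬝ᵥ v') t :=
  (HasDerivAt.fun_sum (u := Finset.univ) fun i _ =>
    (hasDerivAt_pi.mp hu i).fun_mul (hasDerivAt_pi.mp hv i)).congr_deriv Finset.sum_add_distrib

theorem HasDerivAt.matrix_transpose [Fintype m] [Fintype n] {M : 𝕜 → Matrix m n 𝕜}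
    {M' : Matrix m n 𝕜} (hM : HasDerivAt M M' t) : HasDerivAt (fun s => (M s)ᵀ) M'ᵀ t :=
  hasDerivAt_pi.mpr fun j => hasDerivAt_pi.mpr fun i =>
    hasDerivAt_pi.mp (hasDerivAt_pi.mp hM i) j

theorem HasDerivAt.matrix_mulVec [Fintype n] {M : 𝕜 → Matrix m n 𝕜} {M' : Matrix m n 𝕜}
    {u : 𝕜 → n → 𝕜} {u' : n → 𝕜} (hM : HasDerivAt M M' t) (hu : HasDerivAt u u' t) :
    HasDerivAt (fun s => M s *ᵥ u s) (M' *ᵥ u t + M t *ᵥ u') t :=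
  hasDerivAt_pi.mpr fun i => (hasDerivAt_pi.mp hM i).dotProduct hu

theorem HasDerivAt.matrix_mul [Fintype m] [Fintype n] {M : 𝕜 → Matrix l m 𝕜}
    {N : 𝕜 → Matrix m n 𝕜} {M' : Matrix l m 𝕜} {N' : Matrix m n 𝕜}
    (hM : HasDerivAt M M' t) (hN : HasDerivAt N N' t) :
    HasDerivAt (fun s => M s * N s) (M' * N t + M t * N') t :=
  hasDerivAt_pi.mpr fun i => hasDerivAt_pi.mpr fun k =>
    (hasDerivAt_pi.mp hM i).dotProduct (hasDerivAt_pi.mp hN.matrix_transpose k)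

end MatrixCalculus

lemma wedge_sub (a b : V3) : wedge (a - b) = wedge a - wedge b := by
  ext i j; fin_cases i <;> fin_cases j <;> simp [wedge] <;> ring

lemma wedge_transpose (x : V3) : (wedge x)ᵀ = -wedge x := by
  ext i j; fin_cases i <;> fin_cases j <;> simp [wedge]

lemma transpose_mul_wedge_mulVec_mul (A : Mat3) (x : V3) :
    Aᵀ * wedge (A *ᵥ x) * A = A.det • wedge x := by
  ext i j
  fin_cases i <;> fin_cases j <;>
    simp [wedge, Matrix.mul_apply, Matrix.mulVec, dotProduct,
      Matrix.det_fin_three, Fin.sum_univ_three] <;> ring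

lemma SO3.wedge_mulVec {A : Mat3} (hA : SO3 A) (x : V3) :
    wedge (A *ᵥ x) = A * wedge x * Aᵀ := by
  have hA' : A * Aᵀ = 1 := mul_eq_one_comm.mp hA.1
  calc wedge (A *ᵥ x) = A * (Aᵀ * wedge (A *ᵥ x) * A) * Aᵀ := by
        simp only [← Matrix.mul_assoc, hA', Matrix.one_mul, Matrix.mul_assoc _ A, Matrix.mul_one]
    _ = A * wedge x * Aᵀ := by rw [transpose_mul_wedge_mulVec_mul, hA.2, one_smul]

lemma hasDerivAt_attitude_error {ω bω bωh : V3} {R Rh : ℝ → Mat3} {t : ℝ}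
    (hR : HasDerivAt R (R t * wedge (ω - bω)) t)
    (hRh : HasDerivAt Rh (Rh t * wedge (ω - bωh)) t) (hSO : SO3 (Rh t)) :
    HasDerivAt (fun s => R s * (Rh s)ᵀ)
      (-((R t * (Rh t)ᵀ) * wedge (Rh t *ᵥ (bω - bωh)))) t := by
  refine (hR.matrix_mul hRh.matrix_transpose).congr_deriv ?_
  have hsplit : wedge (bω - bωh) = wedge (ω - bωh) - wedge (ω - bω) := by
    rw [← wedge_sub, sub_sub_sub_cancel_left]
  rw [hSO.wedge_mulVec, Matrix.transpose_mul, wedge_transpose, hsplit]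
  simp only [← Matrix.mul_assoc]
  rw [Matrix.mul_assoc (R t) (Rh t)ᵀ (Rh t), hSO.1, Matrix.mul_one]
  noncomm_ring

/-- If `Ṙ = R (ω − bω)^∧`, `R̂̇ = R̂ (ω − b̂ω)^∧`, `ṗ = v` and `p̂̇ = v̂` with
`R̂(t) ∈ SO(3)`, then the invariant position error `e_p = p − R R̂ᵀ p̂` satisfies
`ė_p = e_R (R̂(bω − b̂ω))^∧ p̂ + e_v` exactly, where `e_R = R R̂ᵀ` and
`e_v = v − R R̂ᵀ v̂`. -/
theorem stmt17 (ω bω bωh : V3) (R Rh : ℝ → Mat3) (p ph v vh : ℝ → V3)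
    (hR : ∀ t, HasDerivAt R (R t * wedge (ω - bω)) t)
    (hRh : ∀ t, HasDerivAt Rh (Rh t * wedge (ω - bωh)) t)
    (hp : ∀ t, HasDerivAt p (v t) t)
    (hph : ∀ t, HasDerivAt ph (vh t) t)
    (hSO : ∀ t, SO3 (Rh t)) :
    ∀ t, HasDerivAt (fun s => p s - (R s * (Rh s)ᵀ) *ᵥ ph s)
      (((R t * (Rh t)ᵀ) * wedge (Rh t *ᵥ (bω - bωh))) *ᵥ ph t +
        (v t - (R t * (Rh t)ᵀ) *ᵥ vh t)) t := by
  intro t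
  have hd := (hp t).sub
    ((hasDerivAt_attitude_error (hR t) (hRh t) (hSO t)).matrix_mulVec (hph t))
  rw [Matrix.neg_mulVec] at hd
  exact hd.congr_deriv (by abel)
end
end

section
/- Let W, G, D be fixed real n×n matrices and let B, B̂ : ℝ → Mₙ(ℝ) be continuous matrix-valued functions. Suppose P, P̂ : ℝ → Mₙ(ℝ) are differentiable with P̂(t) invertible for all t, and satisfy Ṗ(t) = P(t)(W − B(t) + D) + (G − D)P(t) and P̂̇(t) = P̂(t)(W − B̂(t) + D) + (G − D)P̂(t). Then the error e_T(t) = P(t) P̂(t)⁻¹ satisfies the exact differential equation ė_T(t) = e_T(t) · P̂(t)(B̂(t) − B(t))P̂(t)⁻¹ + (G − D) e_T(t) − e_T(t)(G − D) for all t. -/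
/-!
Differentiate `e_T = P P̂⁻¹` by the product rule and the derivative `-P̂⁻¹ P̂̇ P̂⁻¹` of the
inverse. Substituting the two dynamics, the `W` and `D` terms coming from `Ṗ` and from `P̂̇`
cancel after `P̂⁻¹ P̂ = 1`, leaving `P (B̂ − B) P̂⁻¹ = e_T · P̂ (B̂ − B) P̂⁻¹` and the commutator
of `G − D` with `e_T`.
-/

open Matrix

section

/- `HasDerivAt` only sees the topology of the matrices, so any equivalent norm may be used;
the `L∞` operator norm makes square matrices a normed algebra. -/
attribute [local instance] Matrix.linftyOpNormedRing Matrix.linftyOpNormedAlgebra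

variable {𝕜 : Type*} [NontriviallyNormedField 𝕜] {n : Type*} [Fintype n] [DecidableEq n]

theorem HasDerivAt.matrix_mul_s18 {R : Type*} [NormedRing R] [NormedAlgebra 𝕜 R]
    {f g : 𝕜 → Matrix n n R} {f' g' : Matrix n n R} {t : 𝕜}
    (hf : HasDerivAt f f' t) (hg : HasDerivAt g g' t) :
    HasDerivAt (fun s => f s * g s) (f' * g t + f t * g') t :=
  hf.mul hg

theorem HasDerivAt.matrix_inv {R : Type*} [NormedCommRing R] [NormedAlgebra 𝕜 R] [CompleteSpace R]
    {f : 𝕜 → Matrix n n R} {f' : Matrix n n R} {t : 𝕜}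
    (hf : HasDerivAt f f' t) (ht : IsUnit (f t)) :
    HasDerivAt (fun s => (f s)⁻¹) (-((f t)⁻¹ * f' * (f t)⁻¹)) t := by
  -- the operator-norm uniformity is the entrywise one only up to unfolding
  have : @CompleteSpace (Matrix n n R)
      (Matrix.linftyOpNormedRing : NormedRing (Matrix n n R)).toUniformSpace :=
    instCompleteSpace n n R
  obtain ⟨u, hu⟩ := ht
  have hinv : HasFDerivAt Ring.inverse
      (-ContinuousLinearMap.mulLeftRight 𝕜 _ ↑u⁻¹ ↑u⁻¹) (f t) :=
    hu ▸ hasFDerivAt_ringInverse u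
  simp only [nonsing_inv_eq_ringInverse, ← hu, Ring.inverse_unit]
  exact hinv.comp_hasDerivAt t hf

end

attribute [local instance] Matrix.normedAddCommGroup Matrix.normedSpace

theorem stmt18_general {n : ℕ} (W G D : Matrix (Fin n) (Fin n) ℝ)
    (B Bh : ℝ → Matrix (Fin n) (Fin n) ℝ)
    (P Ph : ℝ → Matrix (Fin n) (Fin n) ℝ)
    (hPinv : ∀ t, IsUnit (Ph t))
    (hP : ∀ t, HasDerivAt P (P t * (W - B t + D) + (G - D) * P t) t)
    (hPh : ∀ t, HasDerivAt Ph (Ph t * (W - Bh t + D) + (G - D) * Ph t) t) :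
    ∀ t, HasDerivAt (fun s => P s * (Ph s)⁻¹)
      (P t * (Ph t)⁻¹ * (Ph t * (Bh t - B t) * (Ph t)⁻¹) +
        ((G - D) * (P t * (Ph t)⁻¹) - P t * (Ph t)⁻¹ * (G - D))) t := by
  intro t
  have hdet : IsUnit (Ph t).det := (isUnit_iff_isUnit_det _).mp (hPinv t)
  convert (hP t).matrix_mul_s18 ((hPh t).matrix_inv (hPinv t)) using 1
  simp only [mul_add, add_mul, mul_sub, sub_mul, mul_neg, ← Matrix.mul_assoc,
    nonsing_inv_mul_cancel_right _ _ hdet, mul_nonsing_inv_cancel_right _ _ hdet]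
  abel

/-- For n×n matrix curves satisfying `Ṗ = P(W − B + D) + (G − D)P` and
`P̂̇ = P̂(W − B̂ + D) + (G − D)P̂` with `B, B̂` continuous and `P̂(t)` invertible for
all `t`, the error `e_T = P P̂⁻¹` satisfies the exact differential equation
`ė_T = e_T · P̂(B̂ − B)P̂⁻¹ + (G − D) e_T − e_T (G − D)`. -/
theorem stmt18 {n : ℕ} (W G D : Matrix (Fin n) (Fin n) ℝ)
    (B Bh : ℝ → Matrix (Fin n) (Fin n) ℝ)
    (hB : Continuous B) (hBh : Continuous Bh)
    (P Ph : ℝ → Matrix (Fin n) (Fin n) ℝ)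
    (hPinv : ∀ t, IsUnit (Ph t))
    (hP : ∀ t, HasDerivAt P (P t * (W - B t + D) + (G - D) * P t) t)
    (hPh : ∀ t, HasDerivAt Ph (Ph t * (W - Bh t + D) + (G - D) * Ph t) t) :
    ∀ t, HasDerivAt (fun s => P s * (Ph s)⁻¹)
      (P t * (Ph t)⁻¹ * (Ph t * (Bh t - B t) * (Ph t)⁻¹) +
        ((G - D) * (P t * (Ph t)⁻¹) - P t * (Ph t)⁻¹ * (G - D))) t :=
  stmt18_general W G D B Bh P Ph hPinv hP hPh
end
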